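/- Let K ≥ 1, K' ≥ 0 and λ > 0. Let f = h + conj(g) be a sense-preserving (K,K')-elliptic harmonic mapping on the unit disc 𝔻 with f(0) = 0, λ_f(0) = 1, and λ_f(z) ≤ λ for all z ∈ 𝔻. Set ρ₁ = 1/(1 + Kλ + √K') and R₁ = ρ₁ + (Kλ + √K')(ρ₁ + ln((Kλ + √K')ρ₁)). Then the image f(𝔻_{ρ₁}) contains the disc 𝔻_{R₁} = {w : |w| < R₁}. -/

import Mathlib

/-! Since `|g'| < |h'|`, the real differential `v ↦ h' v + conj (g' v)` of `f = h + conj g` is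
invertible, so `f` is a local homeomorphism and maps open sets to open sets. Ellipticity and
`λ_f ≤ λ` give `|h'| + |g'| ≤ T := Kλ + √K'` on `𝔻`. The Cauchy integral formula, applied to
`h' + c g'` for a suitable unimodular `c`, turns this into
`|h'(w) - h'(0)| + |g'(w) - g'(0)| ≤ T|w|/(1 - |w|)`, and integrating along `[0, z]` gives
`|f(z) - z h'(0) - conj (z g'(0))| ≤ T(-log(1 - |z|) - |z|)`. Hence `|f| ≥ R₁` on `|z| = ρ₁`
(using `1 - ρ₁ = Tρ₁`), and an open image of `𝔻_{ρ₁}` whose boundary values avoid `𝔻_{R₁}`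
covers `𝔻_{R₁}` by connectedness. -/

open Complex Metric Filter Topology Set
open scoped Real ComplexConjugate

section CauchyEstimate

variable {E : Type*} [NormedAddCommGroup E] [NormedSpace ℂ E] [CompleteSpace E]

theorem norm_sub_le_of_norm_le_on_sphere {φ : ℂ → E} {r T : ℝ} {w : ℂ}
    (hφ : DifferentiableOn ℂ φ (closedBall 0 r)) (hT : ∀ z ∈ sphere (0 : ℂ) r, ‖φ z‖ ≤ T)
    (hw : ‖w‖ < r) :
    ‖φ w - φ 0‖ ≤ T * ‖w‖ / (r - ‖w‖) := by
  have hr : 0 < r := (norm_nonneg w).trans_lt hw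
  have hwr : 0 < r - ‖w‖ := sub_pos.2 hw
  have hintegrable (a : ℂ) (ha : ‖a‖ < r) : CircleIntegrable (fun z => (z - a)⁻¹ • φ z) 0 r := by
    refine ContinuousOn.circleIntegrable hr.le (ContinuousOn.smul ?_
      (hφ.continuousOn.mono sphere_subset_closedBall))
    refine (continuousOn_id.sub continuousOn_const).inv₀ fun z hz => sub_ne_zero.2 ?_
    rintro rfl
    simp_all
  have hcauchy (a : ℂ) (ha : ‖a‖ < r) :
      (∮ z in C(0, r), (z - a)⁻¹ • φ z) = (2 * π * I : ℂ) • φ a :=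
    hφ.circleIntegral_sub_inv_smul (by simpa using ha)
  have hkernel : ∀ z ∈ sphere (0 : ℂ) r,
      ‖((z - w)⁻¹ • φ z) - (z - 0)⁻¹ • φ z‖ ≤ ‖w‖ / (r * (r - ‖w‖)) * T := by
    intro z hz
    have hz' : ‖z‖ = r := by simpa using hz
    have hz0 : z ≠ 0 := by rintro rfl; simp_all [hr.ne]
    have hzw : r - ‖w‖ ≤ ‖z - w‖ := by
      simpa [hz'] using norm_sub_norm_le z w
    have hzw0 : z - w ≠ 0 := by
      intro h; rw [h, norm_zero] at hzw; linarith
    rw [← sub_smul, norm_smul, sub_zero,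
      show (z - w)⁻¹ - z⁻¹ = w / (z * (z - w)) by field_simp; ring]
    gcongr
    · rw [norm_div, norm_mul, hz']
      gcongr
    · exact hT z hz
  have h := circleIntegral.norm_integral_le_of_norm_le_const hr.le hkernel
  rw [circleIntegral.integral_sub (hintegrable w hw) (hintegrable 0 (by simpa using hr)),
    hcauchy w hw, hcauchy 0 (by simpa using hr), ← smul_sub, norm_smul] at h
  have h2pi : ‖(2 * π * I : ℂ)‖ = 2 * π := by simp [Real.pi_pos.le]
  rw [h2pi] at h
  calc ‖φ w - φ 0‖ ≤ 2 * π * r * (‖w‖ / (r * (r - ‖w‖)) * T) / (2 * π) := by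
        rw [le_div_iff₀ (by positivity)]; linarith
    _ = T * ‖w‖ / (r - ‖w‖) := by field_simp

theorem norm_sub_le_of_norm_le_on_ball {φ : ℂ → E} {T : ℝ} {w : ℂ}
    (hφ : DifferentiableOn ℂ φ (ball 0 1)) (hT : ∀ z ∈ ball (0 : ℂ) 1, ‖φ z‖ ≤ T)
    (hw : ‖w‖ < 1) :
    ‖φ w - φ 0‖ ≤ T * ‖w‖ / (1 - ‖w‖) := by
  have hlim : Tendsto (fun r => T * ‖w‖ / (r - ‖w‖)) (𝓝[<] 1) (𝓝 (T * ‖w‖ / (1 - ‖w‖))) :=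
    ((continuousAt_const.div (continuousAt_id.sub continuousAt_const)
      (sub_pos.2 hw).ne').tendsto).mono_left nhdsWithin_le_nhds
  refine ge_of_tendsto hlim ?_
  filter_upwards [Ioo_mem_nhdsLT hw] with r hr
  have hsub : closedBall (0 : ℂ) r ⊆ ball 0 1 := closedBall_subset_ball hr.2
  exact norm_sub_le_of_norm_le_on_sphere (hφ.mono hsub)
    (fun z hz => hT z (hsub (sphere_subset_closedBall hz))) hr.1

end CauchyEstimate

theorem exists_norm_eq_one_norm_add_mul_eq (a b : ℂ) :
    ∃ c : ℂ, ‖c‖ = 1 ∧ ‖a + c * b‖ = ‖a‖ + ‖b‖ := by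
  refine ⟨exp (↑(arg a - arg b) * I), norm_exp_ofReal_mul_I _, ?_⟩
  have hrot : a + exp (↑(arg a - arg b) * I) * b = ↑(‖a‖ + ‖b‖) * exp (arg a * I) := by
    calc a + exp (↑(arg a - arg b) * I) * b
        = ‖a‖ * exp (arg a * I) + exp (↑(arg a - arg b) * I) * (‖b‖ * exp (arg b * I)) := by
          rw [norm_mul_exp_arg_mul_I, norm_mul_exp_arg_mul_I]
      _ = ↑(‖a‖ + ‖b‖) * exp (arg a * I) := by
          rw [ofReal_sub, sub_mul, exp_sub]
          field_simp
          push_cast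
          ring
  rw [hrot, norm_mul, norm_exp_ofReal_mul_I, mul_one, norm_real,
    Real.norm_of_nonneg (by positivity)]

theorem norm_sub_add_norm_sub_le {u v : ℂ → ℂ} {T : ℝ} {w : ℂ}
    (hu : DifferentiableOn ℂ u (ball 0 1)) (hv : DifferentiableOn ℂ v (ball 0 1))
    (hT : ∀ z ∈ ball (0 : ℂ) 1, ‖u z‖ + ‖v z‖ ≤ T) (hw : ‖w‖ < 1) :
    ‖u w - u 0‖ + ‖v w - v 0‖ ≤ T * ‖w‖ / (1 - ‖w‖) := by
  obtain ⟨c, hc, hcuv⟩ := exists_norm_eq_one_norm_add_mul_eq (u w - u 0) (v w - v 0)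
  have hbound : ∀ z ∈ ball (0 : ℂ) 1, ‖u z + c * v z‖ ≤ T := fun z hz =>
    (norm_add_le _ _).trans (by rw [norm_mul, hc, one_mul]; exact hT z hz)
  have := norm_sub_le_of_norm_le_on_ball (φ := fun z => u z + c * v z)
    (hu.add (hv.const_mul c)) hbound hw
  rwa [add_sub_add_comm, ← mul_sub, hcuv] at this

theorem HasDerivAt.comp_ofReal_mul {h : ℂ → ℂ} {h' z : ℂ} {t : ℝ}
    (hh : HasDerivAt h h' (t * z)) : HasDerivAt (fun s : ℝ => h (s * z)) (h' * z) t :=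
  (hh.comp (t : ℂ) (hasDerivAt_mul_const z)).comp_ofReal

theorem norm_add_conj_sub_linear_le {h g : ℂ → ℂ} {T : ℝ}
    (hh : DifferentiableOn ℂ h (ball 0 1)) (hg : DifferentiableOn ℂ g (ball 0 1))
    (hT : ∀ z ∈ ball (0 : ℂ) 1, ‖deriv h z‖ + ‖deriv g z‖ ≤ T) {z : ℂ} (hz : ‖z‖ < 1) :
    ‖h z + conj (g z) - (h 0 + conj (g 0)) - (z * deriv h 0 + conj (z * deriv g 0))‖
      ≤ T * (-Real.log (1 - ‖z‖) - ‖z‖) := by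
  set a := ‖z‖
  set L := z * deriv h 0 + conj (z * deriv g 0)
  have hpath : ∀ t ∈ Icc (0 : ℝ) 1, ‖(t : ℂ) * z‖ = t * a ∧ t * a < 1 := fun t ht =>
    ⟨by rw [norm_mul, norm_real, Real.norm_of_nonneg ht.1],
      (mul_le_of_le_one_left (norm_nonneg z) ht.2).trans_lt hz⟩
  have hmem : ∀ t ∈ Icc (0 : ℝ) 1, (t : ℂ) * z ∈ ball (0 : ℂ) 1 := fun t ht =>
    mem_ball_zero_iff.2 ((hpath t ht).1 ▸ (hpath t ht).2)
  have hF : ∀ t ∈ Icc (0 : ℝ) 1,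
      HasDerivAt (fun s : ℝ => h (s * z) + conj (g (s * z)) - (h 0 + conj (g 0)) - s * L)
        (deriv h (t * z) * z + conj (deriv g (t * z) * z) - L) t := by
    intro t ht
    have hdiff {φ : ℂ → ℂ} (hφ : DifferentiableOn ℂ φ (ball 0 1)) :=
      ((hφ.differentiableAt (isOpen_ball.mem_nhds (hmem t ht))).hasDerivAt).comp_ofReal_mul
    simpa using (((hdiff hh).fun_add (hdiff hg).star).sub_const (h 0 + conj (g 0))).fun_sub
      ((hasDerivAt_id t).ofReal_comp.mul_const L)
  have hB : ∀ t ∈ Icc (0 : ℝ) 1, HasDerivAt (fun s => -T * (Real.log (1 - a * s) + a * s))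
      (T * a * (t * a / (1 - t * a))) t := by
    intro t ht
    have hpos : 1 - a * t ≠ 0 := by rw [mul_comm]; exact (sub_pos.2 (hpath t ht).2).ne'
    have hlog := (((hasDerivAt_id' t).const_mul a).const_sub 1).log hpos
    refine ((hlog.fun_add ((hasDerivAt_id' t).const_mul a)).const_mul (-T)).congr_deriv ?_
    rw [mul_comm t a]
    field_simp
    ring
  have hF'B : ∀ t ∈ Ico (0 : ℝ) 1,
      ‖deriv h (t * z) * z + conj (deriv g (t * z) * z) - L‖ ≤ T * a * (t * a / (1 - t * a)) := by
    intro t ht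
    have hincr := norm_sub_add_norm_sub_le (hh.analyticOnNhd isOpen_ball).deriv.differentiableOn
      (hg.analyticOnNhd isOpen_ball).deriv.differentiableOn hT
      (mem_ball_zero_iff.1 (hmem t (Ico_subset_Icc_self ht)))
    rw [(hpath t (Ico_subset_Icc_self ht)).1] at hincr
    calc ‖deriv h (t * z) * z + conj (deriv g (t * z) * z) - L‖
        = ‖(deriv h (t * z) - deriv h 0) * z + conj ((deriv g (t * z) - deriv g 0) * z)‖ := by
          simp only [L, map_mul, map_sub]
          ring_nf
      _ ≤ (‖deriv h (t * z) - deriv h 0‖ + ‖deriv g (t * z) - deriv g 0‖) * a := by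
          refine (norm_add_le _ _).trans_eq ?_
          rw [norm_conj, norm_mul, norm_mul, add_mul]
      _ ≤ T * (t * a) / (1 - t * a) * a := by gcongr
      _ = T * a * (t * a / (1 - t * a)) := by ring
  have := image_norm_le_of_norm_deriv_right_le_deriv_boundary' (a := 0) (b := 1)
    (fun t ht => (hF t ht).continuousAt.continuousWithinAt)
    (fun t ht => (hF t (Ico_subset_Icc_self ht)).hasDerivWithinAt) (by simp)
    (fun t ht => (hB t ht).continuousAt.continuousWithinAt)
    (fun t ht => (hB t (Ico_subset_Icc_self ht)).hasDerivWithinAt) hF'B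
    (right_mem_Icc.2 zero_le_one)
  simp only [ofReal_one, one_mul, mul_one] at this
  linarith

theorem map_nhds_add_conj_eq {h g : ℂ → ℂ} {c d z₀ : ℂ} (hh : HasStrictDerivAt h c z₀)
    (hg : HasStrictDerivAt g d z₀) (hdc : ‖d‖ < ‖c‖) :
    map (fun z => h z + conj (g z)) (𝓝 z₀) = 𝓝 (h z₀ + conj (g z₀)) := by
  have hA := (hh.hasStrictFDerivAt.restrictScalars ℝ).add
    (conjCLE.hasStrictFDerivAt.comp z₀ (hg.hasStrictFDerivAt.restrictScalars ℝ))
  refine hA.map_nhds_eq_of_surj (LinearMap.range_eq_top.2 ?_)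
  refine LinearMap.injective_iff_surjective.1 ((injective_iff_map_eq_zero _).2 fun v hv => ?_)
  replace hv : v * c = -conj (v * d) := by simpa [add_eq_zero_iff_eq_neg] using hv
  have hnorm : ‖v‖ * ‖c‖ = ‖v‖ * ‖d‖ := by simpa using congrArg norm hv
  by_contra hv0
  exact hdc.ne' (mul_left_cancel₀ (norm_ne_zero_iff.2 hv0) hnorm)

theorem isOpen_image_of_norm_deriv_lt {h g f : ℂ → ℂ} {U : Set ℂ} (hU : IsOpen U)
    (hf : EqOn f (fun z => h z + conj (g z)) U)
    (hh : DifferentiableOn ℂ h U) (hg : DifferentiableOn ℂ g U)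
    (hlt : ∀ z ∈ U, ‖deriv g z‖ < ‖deriv h z‖) : IsOpen (f '' U) := by
  rw [isOpen_iff_mem_nhds]
  rintro _ ⟨z, hz, rfl⟩
  have hstrict {φ : ℂ → ℂ} (hφ : DifferentiableOn ℂ φ U) : HasStrictDerivAt φ (deriv φ z) z :=
    ((hφ.analyticOnNhd hU) z hz).hasStrictDerivAt
  rw [hf hz, ← map_nhds_add_conj_eq (hstrict hh) (hstrict hg) (hlt z hz),
    ← map_congr (eventuallyEq_of_mem (hU.mem_nhds hz) hf)]
  exact image_mem_map (hU.mem_nhds hz)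

theorem ball_subset_image_ball_of_le_dist {X Y : Type*} [PseudoMetricSpace X] [ProperSpace X]
    [NormedAddCommGroup Y] [NormedSpace ℝ Y] {f : X → Y} {c : X} {r R : ℝ} (hr : 0 < r)
    (hf : ContinuousOn f (closedBall c r)) (hopen : IsOpen (f '' ball c r))
    (hR : ∀ z, dist z c = r → R ≤ dist (f z) (f c)) :
    ball (f c) R ⊆ f '' ball c r := by
  intro y hy
  have hclosed : IsClosed (f '' closedBall c r) :=
    ((isCompact_closedBall c r).image_of_continuousOn hf).isClosed
  have hcover : ball (f c) R ⊆ f '' ball c r ∪ (f '' closedBall c r)ᶜ := by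
    intro w hw
    by_cases hwim : w ∈ f '' closedBall c r
    · obtain ⟨z, hz, rfl⟩ := hwim
      refine Or.inl (mem_image_of_mem f ((mem_closedBall.1 hz).lt_of_ne fun hzr => ?_))
      exact (hR z hzr).not_gt (mem_ball.1 hw)
    · exact Or.inr hwim
  exact (convex_ball (f c) R).isPreconnected.subset_left_of_subset_union hopen
    hclosed.isOpen_compl (disjoint_compl_right.mono_right
      (compl_subset_compl.2 (image_mono ball_subset_closedBall))) hcover
    ⟨f c, mem_ball_self (pos_of_mem_ball hy), mem_image_of_mem f (mem_ball_self hr)⟩ hy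

theorem add_le_mul_add_of_abs_sub_le {K s lam H G : ℝ} (hK : 0 ≤ K)
    (hG : G ≤ (K - 1) / (K + 1) * H + s / (K + 1)) (hlam : |H - G| ≤ lam) :
    H + G ≤ K * lam + s := by
  have hK1 : K + 1 ≠ 0 := by positivity
  field_simp at hG
  nlinarith [mul_le_mul_of_nonneg_left ((le_abs_self _).trans hlam) hK]

theorem le_norm_add_conj_sub {h g : ℂ → ℂ} {T : ℝ}
    (hh : DifferentiableOn ℂ h (ball 0 1)) (hg : DifferentiableOn ℂ g (ball 0 1))
    (hT : ∀ z ∈ ball (0 : ℂ) 1, ‖deriv h z‖ + ‖deriv g z‖ ≤ T) {z : ℂ} (hz : ‖z‖ < 1) :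
    ‖z‖ * (‖deriv h 0‖ - ‖deriv g 0‖) + T * (‖z‖ + Real.log (1 - ‖z‖))
      ≤ ‖h z + conj (g z) - (h 0 + conj (g 0))‖ := by
  have hlin : ‖z‖ * (‖deriv h 0‖ - ‖deriv g 0‖) ≤ ‖z * deriv h 0 + conj (z * deriv g 0)‖ := by
    simpa [mul_sub] using norm_sub_norm_le (z * deriv h 0) (-conj (z * deriv g 0))
  have := norm_le_norm_add_norm_sub (h z + conj (g z) - (h 0 + conj (g 0)))
    (z * deriv h 0 + conj (z * deriv g 0))
  linarith [norm_add_conj_sub_linear_le hh hg hT hz]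

theorem landau_covering_elliptic_general
    (K K' lam : ℝ) (hK : 1 ≤ K)
    (h g f : ℂ → ℂ)
    (hf : ∀ z ∈ ball (0:ℂ) 1, f z = h z + (starRingEnd ℂ) (g z))
    (hh : DifferentiableOn ℂ h (ball (0:ℂ) 1))
    (hg : DifferentiableOn ℂ g (ball (0:ℂ) 1))
    (hsp : ∀ z ∈ ball (0:ℂ) 1,
      0 < ‖deriv h z‖ ^ 2 - ‖deriv g z‖ ^ 2)
    (hell : ∀ z ∈ ball (0:ℂ) 1,
      ‖deriv g z‖ ≤ ((K - 1) / (K + 1)) * ‖deriv h z‖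
        + Real.sqrt K' / (K + 1))
    (hf0 : f 0 = 0)
    (hlam0 : |‖deriv h 0‖ - ‖deriv g 0‖| = 1)
    (hlamf : ∀ z ∈ ball (0:ℂ) 1,
      |‖deriv h z‖ - ‖deriv g z‖| ≤ lam) :
    ball (0:ℂ)
        (1 / (1 + K * lam + Real.sqrt K')
          + (K * lam + Real.sqrt K')
            * (1 / (1 + K * lam + Real.sqrt K')
              + Real.log ((K * lam + Real.sqrt K') * (1 / (1 + K * lam + Real.sqrt K')))))
      ⊆ f '' ball (0:ℂ) (1 / (1 + K * lam + Real.sqrt K')) := by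
  have hlt : ∀ z ∈ ball (0 : ℂ) 1, ‖deriv g z‖ < ‖deriv h z‖ := fun z hz =>
    lt_of_pow_lt_pow_left₀ 2 (norm_nonneg _) (sub_pos.1 (hsp z hz))
  have h0 : (0 : ℂ) ∈ ball (0 : ℂ) 1 := mem_ball_self one_pos
  have hnorm0 : ‖deriv h 0‖ - ‖deriv g 0‖ = 1 := by
    rwa [abs_of_pos (sub_pos.2 (hlt 0 h0))] at hlam0
  have hlam1 : 1 ≤ lam := hlam0 ▸ hlamf 0 h0
  have hT : ∀ z ∈ ball (0 : ℂ) 1, ‖deriv h z‖ + ‖deriv g z‖ ≤ K * lam + √K' := fun z hz =>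
    add_le_mul_add_of_abs_sub_le (by linarith) (hell z hz) (hlamf z hz)
  rw [add_assoc 1]
  set T := K * lam + √K'
  set ρ := 1 / (1 + T)
  have hT0 : 0 < T := by positivity
  have hρ1 : ρ < 1 := by rw [div_lt_one (by positivity)]; linarith
  have hTρ : T * ρ = 1 - ρ := by simp only [ρ]; field_simp; ring
  have hsub : closedBall (0 : ℂ) ρ ⊆ ball 0 1 := closedBall_subset_ball hρ1
  have hsub' : ball (0 : ℂ) ρ ⊆ ball 0 1 := ball_subset_closedBall.trans hsub
  have hfc : ContinuousOn f (ball 0 1) :=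
    (hh.continuousOn.add (continuous_conj.comp_continuousOn hg.continuousOn)).congr hf
  have hcover := ball_subset_image_ball_of_le_dist (f := f) (c := 0) (by positivity)
    (hfc.mono hsub) (isOpen_image_of_norm_deriv_lt isOpen_ball (fun z hz => hf z (hsub' hz))
      (hh.mono hsub') (hg.mono hsub') fun z hz => hlt z (hsub' hz))
    (R := ρ + T * (ρ + Real.log (T * ρ))) fun z hz => ?_
  · rwa [hf0] at hcover
  rw [dist_zero_right] at hz
  have hbound := le_norm_add_conj_sub hh hg hT (hz.trans_lt hρ1)
  rw [← hf 0 h0, hf0, sub_zero, ← hf z (hsub (mem_closedBall_zero_iff.2 hz.le)), hnorm0, mul_one,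
    hz] at hbound
  rwa [hf0, dist_zero_right, hTρ]

/-- Landau-type theorem (covering part) for (K,K')-elliptic harmonic mappings:
f(𝔻_{ρ₁}) contains the disc of radius R₁ = ρ₁ + (Kλ + √K')(ρ₁ + ln((Kλ + √K')ρ₁)). -/
theorem landau_covering_elliptic
    (K K' lam : ℝ) (hK : 1 ≤ K) (hK' : 0 ≤ K') (hlam : 0 < lam)
    (h g f : ℂ → ℂ)
    (hf : ∀ z ∈ ball (0:ℂ) 1, f z = h z + (starRingEnd ℂ) (g z))
    (hh : DifferentiableOn ℂ h (ball (0:ℂ) 1))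
    (hg : DifferentiableOn ℂ g (ball (0:ℂ) 1))
    (hsp : ∀ z ∈ ball (0:ℂ) 1,
      0 < ‖deriv h z‖ ^ 2 - ‖deriv g z‖ ^ 2)
    (hell : ∀ z ∈ ball (0:ℂ) 1,
      ‖deriv g z‖ ≤ ((K - 1) / (K + 1)) * ‖deriv h z‖
        + Real.sqrt K' / (K + 1))
    (hf0 : f 0 = 0)
    (hlam0 : |‖deriv h 0‖ - ‖deriv g 0‖| = 1)
    (hlamf : ∀ z ∈ ball (0:ℂ) 1,
      |‖deriv h z‖ - ‖deriv g z‖| ≤ lam) :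
    ball (0:ℂ)
        (1 / (1 + K * lam + Real.sqrt K')
          + (K * lam + Real.sqrt K')
            * (1 / (1 + K * lam + Real.sqrt K')
              + Real.log ((K * lam + Real.sqrt K') * (1 / (1 + K * lam + Real.sqrt K')))))
      ⊆ f '' ball (0:ℂ) (1 / (1 + K * lam + Real.sqrt K')) :=
  landau_covering_elliptic_general K K' lam hK h g f hf hh hg hsp hell hf0 hlam0 hlamf
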